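/- Let A be a 2×2×r complex hypermatrix. Then Trk A ≤ 4, and the maximal value 4 is attained exactly when A is of essential format (2,2,4) (i.e., when both 2-dimensional flattenings have rank 2 and the (4×r) flattening has rank 4). Moreover, if the z-rank of A is 1 then Trk A ≤ 2 (and Trk A = 1 if also x-rank = y-rank = 1); if the z-rank of A is ≤ 3 then Trk A ≤ 3; and if the z-rank of A is 4 then Trk A = 4. -/

import Mathlib

open Module Submodule

/-- The x-rank: dimension of the span of the x-slices. -/
noncomputable def xRank {r : ℕ} (A : Fin 2 → Fin 2 → Fin r → ℂ) : ℕ :=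
  Module.finrank ℂ (Submodule.span ℂ
    (Set.range fun i => fun (j : Fin 2) (k : Fin r) => A i j k))

/-- The y-rank: dimension of the span of the y-slices. -/
noncomputable def yRank {r : ℕ} (A : Fin 2 → Fin 2 → Fin r → ℂ) : ℕ :=
  Module.finrank ℂ (Submodule.span ℂ
    (Set.range fun j => fun (i : Fin 2) (k : Fin r) => A i j k))

/-- The z-rank: dimension of the span of the z-slices in Mat₂ₓ₂(ℂ). -/
noncomputable def zRank {r : ℕ} (A : Fin 2 → Fin 2 → Fin r → ℂ) : ℕ :=
  Module.finrank ℂ (Submodule.span ℂ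
    (Set.range fun k => fun (i : Fin 2) (j : Fin 2) => A i j k))

/-- Tensor rank of a 2×2×r hypermatrix. -/
noncomputable def Trk {r : ℕ} (A : Fin 2 → Fin 2 → Fin r → ℂ) : ℕ :=
  sInf {n : ℕ | ∃ (u v : Fin n → Fin 2 → ℂ) (w : Fin n → Fin r → ℂ),
    ∀ i j k, A i j k = ∑ m, u m i * v m j * w m k}

section Aux

variable {r : ℕ}

/-- principal generator from rank ≤ 1 span -/
lemma span_le_one_gen {V : Type*} [AddCommGroup V] [Module ℂ V] [FiniteDimensional ℂ V]
    {ι : Type*} (f : ι → V)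
    (h : finrank ℂ (Submodule.span ℂ (Set.range f)) ≤ 1) :
    ∃ g, ∀ i, ∃ c : ℂ, f i = c • g := by
  obtain ⟨g, hg⟩ := ((Submodule.span ℂ (Set.range f)).finrank_le_one_iff_isPrincipal.mp h)
  refine ⟨g, fun i => ?_⟩
  have hm : f i ∈ Submodule.span ℂ (Set.range f) := subset_span ⟨i, rfl⟩
  rw [hg] at hm
  obtain ⟨c, hc⟩ := Submodule.mem_span_singleton.mp hm
  exact ⟨c, hc.symm⟩

lemma decomp_four (A : Fin 2 → Fin 2 → Fin r → ℂ) :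
    ∃ (u v : Fin 4 → Fin 2 → ℂ) (w : Fin 4 → Fin r → ℂ),
      ∀ i j k, A i j k = ∑ m, u m i * v m j * w m k := by
  refine ⟨![![1,0],![1,0],![0,1],![0,1]], ![![1,0],![0,1],![1,0],![0,1]],
    ![A 0 0, A 0 1, A 1 0, A 1 1], ?_⟩
  intro i j k
  fin_cases i <;> fin_cases j <;>
    simp [Fin.sum_univ_four, Matrix.vecHead, Matrix.vecTail]

lemma zRank_le_of_decomp {n : ℕ} (A : Fin 2 → Fin 2 → Fin r → ℂ)
    (u v : Fin n → Fin 2 → ℂ) (w : Fin n → Fin r → ℂ)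
    (h : ∀ i j k, A i j k = ∑ m, u m i * v m j * w m k) :
    zRank A ≤ n := by
  have hle : Submodule.span ℂ (Set.range fun k => fun (i : Fin 2) (j : Fin 2) => A i j k) ≤
      Submodule.span ℂ (Set.range fun m => fun (i : Fin 2) (j : Fin 2) => u m i * v m j) := by
    rw [Submodule.span_le]
    rintro _ ⟨k, rfl⟩
    have hk : (fun (i : Fin 2) (j : Fin 2) => A i j k)
        = ∑ m, w m k • fun (i : Fin 2) (j : Fin 2) => u m i * v m j := by
      funext i j
      rw [h i j k]
      simp only [Finset.sum_apply, Pi.smul_apply, smul_eq_mul]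
      exact Finset.sum_congr rfl fun m _ => by ring
    show (fun (i : Fin 2) (j : Fin 2) => A i j k) ∈ _
    rw [hk]
    exact Submodule.sum_mem _ fun m _ => Submodule.smul_mem _ _ (Submodule.subset_span ⟨m, rfl⟩)
  calc zRank A ≤ finrank ℂ (Submodule.span ℂ
        (Set.range fun m => fun (i : Fin 2) (j : Fin 2) => u m i * v m j)) :=
        Submodule.finrank_mono hle
    _ ≤ Fintype.card (Fin n) := finrank_range_le_card _
    _ = n := Fintype.card_fin n

lemma zRank_le_four (A : Fin 2 → Fin 2 → Fin r → ℂ) : zRank A ≤ 4 := by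
  have h := Submodule.finrank_le (Submodule.span ℂ
    (Set.range fun k => fun (i : Fin 2) (j : Fin 2) => A i j k))
  have h4 : finrank ℂ (Fin 2 → Fin 2 → ℂ) = 4 := by
    simp [Module.finrank_pi_fintype]
  rw [h4] at h
  exact h

lemma xRank_le_two (A : Fin 2 → Fin 2 → Fin r → ℂ) : xRank A ≤ 2 := by
  have := finrank_range_le_card (R := ℂ)
    (fun i => fun (j : Fin 2) (k : Fin r) => A i j k)
  simpa [Set.finrank, xRank] using this

lemma yRank_le_two (A : Fin 2 → Fin 2 → Fin r → ℂ) : yRank A ≤ 2 := by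
  have := finrank_range_le_card (R := ℂ)
    (fun j => fun (i : Fin 2) (k : Fin r) => A i j k)
  simpa [Set.finrank, yRank] using this

lemma zRank_le_two_of_xRank_le_one (A : Fin 2 → Fin 2 → Fin r → ℂ)
    (h : xRank A ≤ 1) : zRank A ≤ 2 := by
  obtain ⟨C, hC⟩ := span_le_one_gen (fun i => fun (j : Fin 2) (k : Fin r) => A i j k) h
  choose dd hd using hC
  have hA : ∀ i j k, A i j k = dd i * C j k := fun i j k => by
    have := congrFun (congrFun (hd i) j) k
    simpa using this
  set g : Fin 2 → (Fin 2 → Fin 2 → ℂ) :=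
    fun t => fun i j => dd i * (if j = t then 1 else 0) with hg
  have hle : Submodule.span ℂ (Set.range fun k => fun (i : Fin 2) (j : Fin 2) => A i j k) ≤
      Submodule.span ℂ (Set.range g) := by
    rw [Submodule.span_le]
    rintro _ ⟨k, rfl⟩
    have hk : (fun (i : Fin 2) (j : Fin 2) => A i j k) = C 0 k • g 0 + C 1 k • g 1 := by
      funext i j
      fin_cases j <;> simp [hg, hA] <;> ring
    show (fun (i : Fin 2) (j : Fin 2) => A i j k) ∈ _
    rw [hk]
    exact Submodule.add_mem _ (Submodule.smul_mem _ _ (Submodule.subset_span ⟨0, rfl⟩))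
      (Submodule.smul_mem _ _ (Submodule.subset_span ⟨1, rfl⟩))
  calc zRank A ≤ finrank ℂ (Submodule.span ℂ (Set.range g)) := Submodule.finrank_mono hle
    _ ≤ Fintype.card (Fin 2) := finrank_range_le_card _
    _ = 2 := Fintype.card_fin 2

lemma zRank_le_two_of_yRank_le_one (A : Fin 2 → Fin 2 → Fin r → ℂ)
    (h : yRank A ≤ 1) : zRank A ≤ 2 := by
  obtain ⟨C, hC⟩ := span_le_one_gen (fun j => fun (i : Fin 2) (k : Fin r) => A i j k) h
  choose dd hd using hC
  have hA : ∀ i j k, A i j k = dd j * C i k := fun i j k => by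
    have := congrFun (congrFun (hd j) i) k
    simpa using this
  set g : Fin 2 → (Fin 2 → Fin 2 → ℂ) :=
    fun t => fun i j => (if i = t then 1 else 0) * dd j with hg
  have hle : Submodule.span ℂ (Set.range fun k => fun (i : Fin 2) (j : Fin 2) => A i j k) ≤
      Submodule.span ℂ (Set.range g) := by
    rw [Submodule.span_le]
    rintro _ ⟨k, rfl⟩
    have hk : (fun (i : Fin 2) (j : Fin 2) => A i j k) = C 0 k • g 0 + C 1 k • g 1 := by
      funext i j
      fin_cases i <;> simp [hg, hA] <;> ring
    show (fun (i : Fin 2) (j : Fin 2) => A i j k) ∈ _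
    rw [hk]
    exact Submodule.add_mem _ (Submodule.smul_mem _ _ (Submodule.subset_span ⟨0, rfl⟩))
      (Submodule.smul_mem _ _ (Submodule.subset_span ⟨1, rfl⟩))
  calc zRank A ≤ finrank ℂ (Submodule.span ℂ (Set.range g)) := Submodule.finrank_mono hle
    _ ≤ Fintype.card (Fin 2) := finrank_range_le_card _
    _ = 2 := Fintype.card_fin 2

lemma exists_ann (A : Fin 2 → Fin 2 → Fin r → ℂ) (h : zRank A ≤ 3) :
    ∃ a b c d : ℂ, ¬(a = 0 ∧ b = 0 ∧ c = 0 ∧ d = 0) ∧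
      ∀ k, a * A 0 0 k + b * A 0 1 k + c * A 1 0 k + d * A 1 1 k = 0 := by
  classical
  set N : Matrix (Fin r) (Fin 2 × Fin 2) ℂ := Matrix.of fun k p => A p.1 p.2 k with hN
  let e : (Fin 2 → Fin 2 → ℂ) ≃ₗ[ℂ] (Fin 2 × Fin 2 → ℂ) :=
    { toFun := fun f p => f p.1 p.2
      invFun := fun g i j => g (i, j)
      map_add' := fun _ _ => rfl
      map_smul' := fun _ _ => rfl
      left_inv := fun f => rfl
      right_inv := fun g => rfl }
  have hzr : zRank A = N.rank := by
    rw [← Matrix.rank_transpose N, Matrix.rank_eq_finrank_span_cols]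
    unfold zRank
    rw [← LinearEquiv.finrank_map_eq e, Submodule.map_span, ← Set.range_comp]
    rfl
  have hrk : finrank ℂ (LinearMap.range N.mulVecLin) ≤ 3 := by
    rw [show finrank ℂ (LinearMap.range N.mulVecLin) = N.rank from rfl, ← hzr]; exact h
  have hfull : finrank ℂ (Fin 2 × Fin 2 → ℂ) = 4 := by
    simp [Module.finrank_fintype_fun_eq_card]
  have hrn := LinearMap.finrank_range_add_finrank_ker N.mulVecLin
  rw [hfull] at hrn
  have hker : LinearMap.ker N.mulVecLin ≠ ⊥ := by
    intro hb
    rw [hb, finrank_bot] at hrn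
    omega
  obtain ⟨x, hx, hx0⟩ := Submodule.exists_mem_ne_zero_of_ne_bot hker
  refine ⟨x (0,0), x (0,1), x (1,0), x (1,1), ?_, ?_⟩
  · rintro ⟨h1, h2, h3, h4⟩
    apply hx0
    funext p
    obtain ⟨i, j⟩ := p
    fin_cases i <;> fin_cases j <;> assumption
  · intro k
    have hxk : N.mulVecLin x = 0 := LinearMap.mem_ker.mp hx
    have := congrFun hxk k
    simp only [Matrix.mulVecLin_apply, Matrix.mulVec, dotProduct,
      Fintype.sum_prod_type, Fin.sum_univ_two, Pi.zero_apply] at this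
    rw [hN] at this
    simp only [Matrix.of_apply] at this
    linear_combination this

set_option maxHeartbeats 1000000 in
lemma decomp3 (A : Fin 2 → Fin 2 → Fin r → ℂ) (a b c d : ℂ)
    (hX : ¬(a = 0 ∧ b = 0 ∧ c = 0 ∧ d = 0))
    (hrel : ∀ k, a * A 0 0 k + b * A 0 1 k + c * A 1 0 k + d * A 1 1 k = 0) :
    ∃ (u v : Fin 3 → Fin 2 → ℂ) (w : Fin 3 → Fin r → ℂ),
      ∀ i j k, A i j k = ∑ m, u m i * v m j * w m k := by
  by_cases hD : a * d - b * c ≠ 0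
  · refine ⟨![![1,0], ![0,1], ![1,1]],
      ![![b,-a], ![d,-c], ![b+d,-(a+c)]],
      ![fun k => (-(a+c) * A 0 0 k - (b+d) * A 0 1 k)/(a*d-b*c),
        fun k => ((a+c) * A 1 0 k + (b+d) * A 1 1 k)/(a*d-b*c),
        fun k => (a * A 0 0 k + b * A 0 1 k)/(a*d-b*c)], ?_⟩
    intro i j k
    have hD1 : a * d - c * b ≠ 0 := by intro h0; apply hD; linear_combination h0
    have hD2 : d * a - c * b ≠ 0 := by intro h0; apply hD; linear_combination h0
    have hD3 : -(c * b) + a * d ≠ 0 := by intro h0; apply hD; linear_combination h0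
    fin_cases i <;> fin_cases j <;>
      · simp [Fin.sum_univ_three, Matrix.vecHead, Matrix.vecTail]
        field_simp
        try ring
        try linear_combination (b+d) * hrel k
        try linear_combination (-(b+d)) * hrel k
        try linear_combination (a+c) * hrel k
        try linear_combination (-(a+c)) * hrel k
        try linear_combination (a+c) * (a*d-b*c) * hrel k
        try linear_combination (-(a+c)) * (a*d-b*c) * hrel k
        try linear_combination (b+d) * (a*d-b*c) * hrel k
        try linear_combination (-(b+d)) * (a*d-b*c) * hrel k
  · push_neg at hD
    by_cases ha : a ≠ 0
    · refine ⟨![![c,-a], ![c,-a], ![1,0]], ![![1,0], ![0,1], ![b,-a]],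
        ![fun k => -A 1 0 k / a, fun k => -A 1 1 k / a,
          fun k => -(c * A 1 1 k + a * A 0 1 k)/(a*a)], ?_⟩
      intro i j k
      fin_cases i <;> fin_cases j <;>
        · simp [Fin.sum_univ_three, Matrix.vecHead, Matrix.vecTail]
          field_simp
          try ring
          try linear_combination a * hrel k - A 1 1 k * hD
          try linear_combination -(a * hrel k) + A 1 1 k * hD
          try linear_combination a^2 * hrel k - a * A 1 1 k * hD
    · by_cases hb : b ≠ 0
      · refine ⟨![![d,-b], ![d,-b], ![1,0]], ![![1,0], ![0,1], ![b,-a]],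
          ![fun k => -A 1 0 k / b, fun k => -A 1 1 k / b,
            fun k => (b * A 0 0 k + d * A 1 0 k)/(b*b)], ?_⟩
        intro i j k
        fin_cases i <;> fin_cases j <;>
          · simp [Fin.sum_univ_three, Matrix.vecHead, Matrix.vecTail]
            field_simp
            try ring
            try linear_combination b * hrel k + A 1 0 k * hD
            try linear_combination -(b * hrel k) - A 1 0 k * hD
            try linear_combination b^2 * hrel k + b * A 1 0 k * hD
      · by_cases hc : c ≠ 0
        · refine ⟨![![1,0], ![0,1], ![c,-a]], ![![d,-c], ![d,-c], ![1,0]],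
            ![fun k => -A 0 1 k / c, fun k => -A 1 1 k / c,
              fun k => (c * A 0 0 k + d * A 0 1 k)/(c*c)], ?_⟩
          intro i j k
          fin_cases i <;> fin_cases j <;>
            · simp [Fin.sum_univ_three, Matrix.vecHead, Matrix.vecTail]
              field_simp
              try ring
              try linear_combination c * hrel k + A 0 1 k * hD
              try linear_combination -(c * hrel k) - A 0 1 k * hD
              try linear_combination c^2 * hrel k + c * A 0 1 k * hD
        · by_cases hd : d ≠ 0
          · refine ⟨![![d,-b], ![d,-b], ![0,1]], ![![1,0], ![0,1], ![d,-c]],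
              ![fun k => A 0 0 k / d, fun k => A 0 1 k / d,
                fun k => (d * A 1 0 k + b * A 0 0 k)/(d*d)], ?_⟩
            intro i j k
            fin_cases i <;> fin_cases j <;>
              · simp [Fin.sum_univ_three, Matrix.vecHead, Matrix.vecTail]
                field_simp
                try ring
                try linear_combination d * hrel k - A 0 0 k * hD
                try linear_combination -(d * hrel k) + A 0 0 k * hD
                try linear_combination d^2 * hrel k - d * A 0 0 k * hD
          · push_neg at ha hb hc hd
            exact absurd ⟨ha, hb, hc, hd⟩ hX

lemma decomp_two_of_zRank_le_one (A : Fin 2 → Fin 2 → Fin r → ℂ) (h : zRank A ≤ 1) :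
    ∃ (u v : Fin 2 → Fin 2 → ℂ) (w : Fin 2 → Fin r → ℂ),
      ∀ i j k, A i j k = ∑ m, u m i * v m j * w m k := by
  obtain ⟨B, hB⟩ := span_le_one_gen (fun k => fun (i : Fin 2) (j : Fin 2) => A i j k) h
  choose c hc using hB
  have hA : ∀ i j k, A i j k = c k * B i j := fun i j k => by
    have := congrFun (congrFun (hc k) i) j
    simpa using this
  refine ⟨![![1,0],![0,1]], ![B 0, B 1], ![c, c], ?_⟩
  intro i j k
  fin_cases i <;> fin_cases j <;>
    · simp [Fin.sum_univ_two, Matrix.vecHead, Matrix.vecTail, hA]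
      try ring

lemma exists_ne_zero_of_zRank_eq_one (A : Fin 2 → Fin 2 → Fin r → ℂ)
    (h : zRank A = 1) : ∃ i j k, A i j k ≠ 0 := by
  by_contra hall
  push_neg at hall
  have hsp : Submodule.span ℂ (Set.range fun k => fun (i : Fin 2) (j : Fin 2) => A i j k) = ⊥ :=
    Submodule.span_eq_bot.mpr (by rintro _ ⟨k, rfl⟩; funext i j; exact hall i j k)
  unfold zRank at h
  rw [hsp, finrank_bot] at h
  exact one_ne_zero h.symm

lemma trk_one (A : Fin 2 → Fin 2 → Fin r → ℂ) (hz : zRank A = 1) (hx : xRank A = 1) :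
    Trk A = 1 := by
  obtain ⟨i₀, j₀, k₀, hA0⟩ := exists_ne_zero_of_zRank_eq_one A hz
  obtain ⟨B, hB⟩ := span_le_one_gen (fun k => fun (i : Fin 2) (j : Fin 2) => A i j k) hz.le
  choose c hc using hB
  have hzA : ∀ i j k, A i j k = c k * B i j := fun i j k => by
    have := congrFun (congrFun (hc k) i) j
    simpa using this
  obtain ⟨C, hC⟩ := span_le_one_gen (fun i => fun (j : Fin 2) (k : Fin r) => A i j k) hx.le
  choose dd hd using hC
  have hxA : ∀ i j k, A i j k = dd i * C j k := fun i j k => by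
    have := congrFun (congrFun (hd i) j) k
    simpa using this
  have hdi : dd i₀ ≠ 0 := fun h0 => hA0 (by rw [hxA, h0, zero_mul])
  have key : ∀ j k, dd i₀ * C j k = c k * B i₀ j := fun j k => by rw [← hxA, hzA]
  apply le_antisymm
  · apply Nat.sInf_le
    refine ⟨![fun i => dd i / dd i₀], ![B i₀], ![c], ?_⟩
    intro i j k
    rw [Fin.sum_univ_one, hxA i j k]
    show dd i * C j k = (fun i => dd i / dd i₀) i * B i₀ j * c k
    field_simp
    linear_combination dd i * key j k
  · rw [Nat.one_le_iff_ne_zero]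
    intro h0
    have hne : Set.Nonempty {n : ℕ | ∃ (u v : Fin n → Fin 2 → ℂ) (w : Fin n → Fin r → ℂ),
        ∀ i j k, A i j k = ∑ m, u m i * v m j * w m k} := ⟨4, decomp_four A⟩
    rcases Nat.sInf_eq_zero.mp h0 with h0' | hemp
    · obtain ⟨u, v, w, hw⟩ := h0'
      have := hw i₀ j₀ k₀
      exact hA0 (by simpa using this)
    · exact absurd hemp (Set.nonempty_iff_ne_empty.mp hne)

end Aux

/-- for a 2×2×r hypermatrix, Trk A ≤ 4; the maximum 4 is attained
exactly when the essential format is (2,2,4); z-rank 1 gives Trk ≤ 2, and = 1 if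
moreover x-rank = y-rank = 1; z-rank ≤ 3 gives Trk ≤ 3; z-rank 4 gives Trk = 4. -/
theorem trk_2_2_r (r : ℕ) (A : Fin 2 → Fin 2 → Fin r → ℂ) :
    Trk A ≤ 4 ∧
    (Trk A = 4 ↔ (xRank A = 2 ∧ yRank A = 2 ∧ zRank A = 4)) ∧
    (zRank A = 1 → Trk A ≤ 2) ∧
    (zRank A = 1 ∧ xRank A = 1 ∧ yRank A = 1 → Trk A = 1) ∧
    (zRank A ≤ 3 → Trk A ≤ 3) ∧
    (zRank A = 4 → Trk A = 4) := by
  have hTrk4 : Trk A ≤ 4 := Nat.sInf_le (decomp_four A)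
  have hne : Set.Nonempty {n : ℕ | ∃ (u v : Fin n → Fin 2 → ℂ) (w : Fin n → Fin r → ℂ),
      ∀ i j k, A i j k = ∑ m, u m i * v m j * w m k} := ⟨4, decomp_four A⟩
  obtain ⟨u, v, w, hw⟩ := Nat.sInf_mem hne
  have hzTrk : zRank A ≤ Trk A := zRank_le_of_decomp A u v w hw
  have h3 : zRank A ≤ 3 → Trk A ≤ 3 := fun h => by
    obtain ⟨a, b, c, d, hX, hrel⟩ := exists_ann A h
    exact Nat.sInf_le (decomp3 A a b c d hX hrel)
  have hz4 : zRank A = 4 → Trk A = 4 := fun h => le_antisymm hTrk4 (h ▸ hzTrk)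
  have h2 : zRank A = 1 → Trk A ≤ 2 := fun h =>
    Nat.sInf_le (decomp_two_of_zRank_le_one A h.le)
  refine ⟨hTrk4, ⟨?_, ?_⟩, h2, fun h => trk_one A h.1 h.2.1, h3, hz4⟩
  · intro h4
    have hz : zRank A = 4 := by
      by_contra hzz
      have hz3 : zRank A ≤ 3 := by have := zRank_le_four A; omega
      have := h3 hz3; omega
    refine ⟨?_, ?_, hz⟩
    · have h2x := xRank_le_two A
      by_contra hxx
      have hx1 : xRank A ≤ 1 := by omega
      have := zRank_le_two_of_xRank_le_one A hx1
      omega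
    · have h2y := yRank_le_two A
      by_contra hyy
      have hy1 : yRank A ≤ 1 := by omega
      have := zRank_le_two_of_yRank_le_one A hy1
      omega
  · rintro ⟨-, -, hz⟩
    exact hz4 hz
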